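/- arXiv:1511.03299 — 2 statements merged into one kernel-verified Lean document; each statement's English description precedes it below -/
import Mathlib

section
/- Consider a tree-structured latent model rooted at i with latent pmf q(y) = ρ(y_i)·Π_{v≠i} t_v(y_v, y_{par(v)}) and a noisy-or observation X with P(X=0 | Y=y) = S(y) = (1-l)·Π_v (f_v)^{[y_v]}. Let k be a child of i, and assume ρ(0) > 0, ρ(1) > 0, and t_k(d, 0) > 0 for both d ∈ {0,1}. Then (Σ_{d} t_k(d,1)·g_k(d)) / (Σ_{d} t_k(d,0)·g_k(d)) = (Σ_{d} P(Y_k=d | Y_i=1)·P(X=0 | Y_i=0, Y_k=d)) / P(X=0 | Y_i=0); i.e., the subtree correction factor c_{i,j,k} equals an expression computable from low-order conditional moments. -/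
open Finset

-- The subtree of node `k`: all nodes whose iterated parent reaches `k`.
open Classical in
noncomputable def subtree (m : ℕ) (par : Fin m → Fin m) (k : Fin m) : Finset (Fin m) :=
  Finset.univ.filter fun v => ∃ n : ℕ, par^[n] v = k

/-- The subtree evidence function `g_k(c)`, with functions `z : T(k) → {0,1}`
encoded as `z : Fin m → Bool` forced to be `false` outside the subtree. -/
noncomputable def gfun (m : ℕ) (par : Fin m → Fin m) (t : Fin m → Bool → Bool → ℝ)
    (f : Fin m → ℝ) (k : Fin m) (c : Bool) : ℝ :=
  ∑ z : Fin m → Bool,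
    if z k = c ∧ ∀ v, v ∉ subtree m par k → z v = false then
      (∏ v ∈ (subtree m par k).erase k, t v (z v) (z (par v))) *
        ∏ v ∈ subtree m par k, (if z v then f v else 1)
    else 0

/-- The tree latent pmf `q(y) = ρ(y_i) ∏_{v ≠ i} t_v(y_v, y_{par v})`. -/
noncomputable def qfun (m : ℕ) (i : Fin m) (par : Fin m → Fin m) (ρ : Bool → ℝ)
    (t : Fin m → Bool → Bool → ℝ) (y : Fin m → Bool) : ℝ :=
  ρ (y i) * ∏ v : Fin m, if v = i then 1 else t v (y v) (y (par v))

/-- The noisy-or off-probability `S(y) = (1-l) ∏_v f_v^{[y_v]}`. -/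
noncomputable def Sfun (m : ℕ) (l : ℝ) (f : Fin m → ℝ) (y : Fin m → Bool) : ℝ :=
  (1 - l) * ∏ v : Fin m, if y v then f v else 1

/-!
Cutting the edge between `k` and its parent `i` factorises every configuration sum with
`y_i = c` and `y_k = d` as `ρ(c) · t_k(d, c) · (1 - l) g_k(d) · W(c)`, where `W(c)` is the
analogous sum over the complement of `T(k)`, rooted at `i`. Without the noisy-or weights both
branch sums equal `1`: summing out the leaves one at a time only uses that each `t_v(·, p)` is a
pmf. Hence `P(Y_k = d | Y_i = 1) = t_k(d, 1)`, `P(X = 0 | Y_i = 0, Y_k = d) = (1 - l) g_k(d) W(0)`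
and `P(X = 0 | Y_i = 0) = (1 - l) W(0) Σ_d t_k(d, 0) g_k(d)`, so the right-hand side is the
left-hand side with numerator and denominator multiplied by `(1 - l) W(0)`, which is positive
since `f ≤ 1` gives `W(0) ≥ ∏ f > 0`.
-/

open Function

section Subtree

variable {m : ℕ} {par : Fin m → Fin m}

lemma mem_subtree {k v : Fin m} : v ∈ subtree m par k ↔ ∃ n, par^[n] v = k := by
  simp [subtree]

lemma self_mem_subtree (k : Fin m) : k ∈ subtree m par k :=
  mem_subtree.2 ⟨0, rfl⟩

lemma par_mem_subtree {k v : Fin m} (hv : v ∈ (subtree m par k).erase k) :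
    par v ∈ subtree m par k := by
  obtain ⟨hvk, hv⟩ := Finset.mem_erase.1 hv
  obtain ⟨n, hn⟩ := mem_subtree.1 hv
  cases n with
  | zero => exact absurd hn hvk
  | succ n => exact mem_subtree.2 ⟨n, by rwa [← iterate_succ_apply]⟩

lemma mem_subtree_of_par_mem {k v : Fin m} (hv : par v ∈ subtree m par k) :
    v ∈ subtree m par k := by
  obtain ⟨n, hn⟩ := mem_subtree.1 hv
  exact mem_subtree.2 ⟨n + 1, by rwa [iterate_succ_apply]⟩

lemma root_notMem_subtree {i k : Fin m} (hroot : par i = i) (hki : k ≠ i) :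
    i ∉ subtree m par k := by
  intro hi
  obtain ⟨n, hn⟩ := mem_subtree.1 hi
  exact hki (by rw [← hn, Function.iterate_fixed hroot])

end Subtree

section RootedTree

variable {V : Type*} {par : V → V} {i : V}

lemma par_ne_self (hreach : ∀ v, ∃ n, par^[n] v = i) {v : V} (hv : v ≠ i) : par v ≠ v := by
  intro hfix
  obtain ⟨n, hn⟩ := hreach v
  exact hv (by rwa [Function.iterate_fixed hfix] at hn)

lemma exists_leaf (hreach : ∀ v, ∃ n, par^[n] v = i) {s : Finset V} (hs : s.Nonempty)
    (hi : i ∉ s) : ∃ w ∈ s, ∀ u ∈ s, par u ≠ w := by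
  classical
  have depth_par_lt : ∀ u, u ≠ i → Nat.find (hreach (par u)) < Nat.find (hreach u) := by
    intro u hu
    have hpos : Nat.find (hreach u) ≠ 0 := fun h0 =>
      hu (by simpa [h0] using Nat.find_spec (hreach u))
    have hpar : par^[Nat.find (hreach u) - 1] (par u) = i := by
      rw [← iterate_succ_apply, Nat.succ_eq_add_one, Nat.sub_add_cancel (Nat.pos_of_ne_zero hpos)]
      exact Nat.find_spec (hreach u)
    exact (Nat.find_min' _ hpar).trans_lt (by omega)
  obtain ⟨w, hw, hmax⟩ := s.exists_max_image (fun v => Nat.find (hreach v)) hs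
  refine ⟨w, hw, fun u hu hpar => ?_⟩
  have := depth_par_lt u (ne_of_mem_of_not_mem hu hi)
  rw [hpar] at this
  exact (hmax u hu).not_gt this

end RootedTree

section Configurations

variable {V : Type*} [Fintype V] [DecidableEq V]

lemma sum_eq_sum_update {M : Type*} [AddCommMonoid M] (w : V) (F : (V → Bool) → M) :
    ∑ z, F z = ∑ z with z w = false, ∑ b, F (update z w b) := by
  rw [Finset.sum_comm, ← Finset.sum_fiberwise Finset.univ (fun z => z w) F]
  refine Finset.sum_congr rfl fun b _ => ?_
  refine Finset.sum_nbij' (fun z => update z w false) (fun z => update z w b)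
    ?_ ?_ ?_ ?_ ?_ <;> intro z hz <;> simp_all
  rw [← hz, update_eq_self]

lemma sum_eq_sum_piecewise {M : Type*} [AddCommMonoid M] (T : Finset V) (F : (V → Bool) → M) :
    ∑ y, F y = ∑ z₁, ∑ z₂,
      if (∀ v, v ∉ T → z₁ v = false) ∧ ∀ v ∈ T, z₂ v = false then
        F (T.piecewise z₁ z₂)
      else 0 := by
  rw [← Fintype.sum_prod_type', ← Finset.sum_filter]
  refine Finset.sum_nbij' (fun y => (T.piecewise y fun _ => false, T.piecewise (fun _ => false) y))
    (fun p => T.piecewise p.1 p.2) ?_ ?_ ?_ ?_ ?_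
  · intro y _
    simp +contextual [Finset.piecewise_eq_of_notMem, Finset.piecewise_eq_of_mem]
  · simp
  · intro y _
    ext v
    by_cases hv : v ∈ T <;> simp [hv]
  · intro p hp
    simp only [Finset.mem_filter, Finset.mem_univ, true_and] at hp
    ext v <;> by_cases hv : v ∈ T <;> simp [hv, hp.1 v, hp.2 v]
  · intro y _
    congr 1
    ext v
    by_cases hv : v ∈ T <;> simp [hv]

end Configurations

section RootedSum

variable {V : Type*} [Fintype V] [DecidableEq V] {par : V → V} {t : V → Bool → Bool → ℝ}

noncomputable def rootedSum (par : V → V) (t : V → Bool → Bool → ℝ) (g : V → ℝ)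
    (S : Finset V) (r : V) (c : Bool) : ℝ :=
  ∑ z : V → Bool,
    if z r = c ∧ ∀ v, v ∉ S → z v = false then
      (∏ v ∈ S.erase r, t v (z v) (z (par v))) * ∏ v ∈ S, (if z v then g v else 1)
    else 0

lemma rootedSum_one (S : Finset V) (r : V) (c : Bool) :
    rootedSum par t 1 S r c =
      ∑ z : V → Bool,
        if z r = c ∧ ∀ v, v ∉ S → z v = false then
          ∏ v ∈ S.erase r, t v (z v) (z (par v))
        else 0 := by
  simp [rootedSum]

lemma rootedSum_one_singleton (r : V) (c : Bool) : rootedSum par t 1 {r} r c = 1 := by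
  have hsupp : ∀ z : V → Bool, (z r = c ∧ ∀ v, v ∉ ({r} : Finset V) → z v = false) ↔
      z = update (fun _ => false) r c := by
    intro z
    constructor
    · rintro ⟨hr, hout⟩
      ext v
      by_cases hv : v = r
      · simp [hv, hr]
      · simp [hv, hout v (by simpa using hv)]
    · rintro rfl
      simp +contextual
  simp only [rootedSum_one, Finset.erase_singleton, Finset.prod_empty, hsupp]
  simp

lemma rootedSum_one_erase_leaf {S : Finset V} {r w : V} (hw : w ∈ S.erase r) (hww : par w ≠ w)
    (hleaf : ∀ u ∈ S.erase r, par u ≠ w) (ht : ∀ p, t w false p + t w true p = 1)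
    (c : Bool) :
    rootedSum par t 1 S r c = rootedSum par t 1 (S.erase w) r c := by
  obtain ⟨hwr, hwS⟩ := Finset.mem_erase.1 hw
  rw [rootedSum_one, rootedSum_one, sum_eq_sum_update w]
  conv_rhs => rw [← Finset.sum_filter_of_ne (p := fun z => z w = false) fun z _ hz => by
    by_contra hzw
    exact hz (if_neg fun h => hzw (h.2 w (Finset.notMem_erase w S)))]
  refine Finset.sum_congr rfl fun z hz => ?_
  have hzw : z w = false := (Finset.mem_filter.1 hz).2
  have hsupp : ∀ b, (update z w b r = c ∧ ∀ v, v ∉ S → update z w b v = false) ↔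
      (z r = c ∧ ∀ v, v ∉ S.erase w → z v = false) := by
    intro b
    rw [update_of_ne hwr.symm]
    refine and_congr_right fun _ => ⟨fun h v hv => ?_, fun h v hv => ?_⟩
    · by_cases hvw : v = w
      · exact hvw ▸ hzw
      · simpa [update_of_ne hvw] using h v fun hvS => hv (Finset.mem_erase.2 ⟨hvw, hvS⟩)
    · have hvw : v ≠ w := fun h => hv (h ▸ hwS)
      rw [update_of_ne hvw]
      exact h v fun hvS => hv (Finset.mem_of_mem_erase hvS)
  have hprod : ∀ b, ∏ v ∈ S.erase r, t v (update z w b v) (update z w b (par v)) =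
      t w b (z (par w)) * ∏ v ∈ (S.erase w).erase r, t v (z v) (z (par v)) := by
    intro b
    rw [← Finset.mul_prod_erase _ _ hw, Finset.erase_right_comm (s := S) (a := w),
      update_self, update_of_ne hww]
    congr 1
    refine Finset.prod_congr rfl fun v hv => ?_
    obtain ⟨hvw, hv⟩ := Finset.mem_erase.1 hv
    rw [update_of_ne hvw, update_of_ne (hleaf v hv)]
  simp only [hsupp, hprod, Fintype.sum_bool]
  split_ifs
  · rw [← add_mul, add_comm, ht, one_mul]
  · rw [add_zero]

variable {i : V}

theorem rootedSum_one_eq_one (hreach : ∀ v, ∃ n, par^[n] v = i)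
    (ht1 : ∀ v, v ≠ i → ∀ c, t v false c + t v true c = 1) {S : Finset V} {r : V}
    (hr : r ∈ S) (hclos : ∀ v ∈ S.erase r, par v ∈ S) (hi : i ∉ S.erase r) (c : Bool) :
    rootedSum par t 1 S r c = 1 := by
  induction S using Finset.strongInduction with
  | H S ih =>
    rcases (S.erase r).eq_empty_or_nonempty with hS | hS
    · obtain rfl : S = {r} :=
        ((Finset.erase_eq_empty_iff S r).1 hS).resolve_left (Finset.ne_empty_of_mem hr)
      exact rootedSum_one_singleton r c
    obtain ⟨w, hw, hleaf⟩ := exists_leaf hreach hS hi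
    have hwi : w ≠ i := ne_of_mem_of_not_mem hw hi
    rw [rootedSum_one_erase_leaf hw (par_ne_self hreach hwi) hleaf (ht1 w hwi)]
    obtain ⟨hwr, hwS⟩ := Finset.mem_erase.1 hw
    refine ih _ (Finset.erase_ssubset hwS) (Finset.mem_erase.2 ⟨hwr.symm, hr⟩) (fun v hv => ?_)
      (fun h => hi (Finset.erase_subset_erase r (S.erase_subset w) h))
    rw [Finset.erase_right_comm] at hv
    have hv' := Finset.mem_of_mem_erase hv
    exact Finset.mem_erase.2 ⟨hleaf v hv', hclos v hv'⟩

theorem rootedSum_pos (hreach : ∀ v, ∃ n, par^[n] v = i)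
    (ht0 : ∀ v, v ≠ i → ∀ a c, 0 ≤ t v a c)
    (ht1 : ∀ v, v ≠ i → ∀ c, t v false c + t v true c = 1) {g : V → ℝ}
    (hg : ∀ v, 0 < g v ∧ g v ≤ 1) {S : Finset V} {r : V} (hr : r ∈ S)
    (hclos : ∀ v ∈ S.erase r, par v ∈ S) (hi : i ∉ S.erase r) (c : Bool) :
    0 < rootedSum par t g S r c := by
  calc 0 < ∏ v ∈ S, g v := Finset.prod_pos fun v _ => (hg v).1
    _ = (∏ v ∈ S, g v) * rootedSum par t 1 S r c := by
      rw [rootedSum_one_eq_one hreach ht1 hr hclos hi, mul_one]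
    _ ≤ rootedSum par t g S r c := by
      rw [rootedSum_one, rootedSum, Finset.mul_sum]
      gcongr with z
      split_ifs
      · rw [mul_comm]
        gcongr
        · exact Finset.prod_nonneg fun v hv => ht0 v (ne_of_mem_of_not_mem hv hi) _ _
        · exact fun v _ => (hg v).1.le
        · split_ifs
          exacts [le_rfl, (hg _).2]
      · rw [mul_zero]

end RootedSum

section Factorization

variable {V : Type*} [Fintype V] [DecidableEq V] {par : V → V} {t : V → Bool → Bool → ℝ}
  {T : Finset V} {i k : V}

lemma prod_edge_piecewise (hk : k ∈ T) (hi : i ∉ T) (hpark : par k = i)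
    (hT : ∀ v ∈ T.erase k, par v ∈ T) (hTc : ∀ v, v ∉ T → par v ∉ T)
    (z₁ z₂ : V → Bool) :
    (∏ v, if v = i then 1 else t v (T.piecewise z₁ z₂ v) (T.piecewise z₁ z₂ (par v))) =
      t k (z₁ k) (z₂ i) * (∏ v ∈ T.erase k, t v (z₁ v) (z₁ (par v))) *
        ∏ v ∈ Tᶜ.erase i, t v (z₂ v) (z₂ (par v)) := by
  rw [← Finset.prod_mul_prod_compl T, ← Finset.mul_prod_erase T _ hk,
    ← Finset.mul_prod_erase Tᶜ _ (Finset.mem_compl.2 hi), if_pos rfl, one_mul,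
    if_neg (ne_of_mem_of_not_mem hk hi), hpark, T.piecewise_eq_of_mem _ _ hk,
    T.piecewise_eq_of_notMem _ _ hi]
  congr 1
  · congr 1
    refine Finset.prod_congr rfl fun v hv => ?_
    obtain ⟨-, hvT⟩ := Finset.mem_erase.1 hv
    rw [if_neg (ne_of_mem_of_not_mem hvT hi), T.piecewise_eq_of_mem _ _ hvT,
      T.piecewise_eq_of_mem _ _ (hT v hv)]
  · refine Finset.prod_congr rfl fun v hv => ?_
    obtain ⟨hvi, hvT⟩ := Finset.mem_erase.1 hv
    rw [Finset.mem_compl] at hvT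
    rw [if_neg hvi, T.piecewise_eq_of_notMem _ _ hvT, T.piecewise_eq_of_notMem _ _ (hTc v hvT)]

lemma prod_weight_piecewise (g : V → ℝ) (z₁ z₂ : V → Bool) :
    (∏ v, if T.piecewise z₁ z₂ v then g v else 1) =
      (∏ v ∈ T, if z₁ v then g v else 1) * ∏ v ∈ Tᶜ, if z₂ v then g v else 1 := by
  rw [← Finset.prod_mul_prod_compl T]
  congr 1 <;> refine Finset.prod_congr rfl fun v hv => ?_
  · rw [T.piecewise_eq_of_mem _ _ hv]
  · rw [T.piecewise_eq_of_notMem _ _ (Finset.mem_compl.1 hv)]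

theorem sum_prod_edge_mul_prod_weight (hk : k ∈ T) (hi : i ∉ T) (hpark : par k = i)
    (hT : ∀ v ∈ T.erase k, par v ∈ T) (hTc : ∀ v, v ∉ T → par v ∉ T) (g : V → ℝ)
    (c d : Bool) :
    (∑ y : V → Bool, if y i = c ∧ y k = d then
        (∏ v, if v = i then 1 else t v (y v) (y (par v))) * ∏ v, (if y v then g v else 1)
      else 0) =
      t k d c * (rootedSum par t g T k d * rootedSum par t g Tᶜ i c) := by
  rw [sum_eq_sum_piecewise T, rootedSum, rootedSum, Finset.sum_mul_sum, Finset.mul_sum]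
  refine Finset.sum_congr rfl fun z₁ _ => ?_
  rw [Finset.mul_sum]
  refine Finset.sum_congr rfl fun z₂ _ => ?_
  simp only [T.piecewise_eq_of_mem _ _ hk, T.piecewise_eq_of_notMem _ _ hi,
    prod_edge_piecewise hk hi hpark hT hTc, prod_weight_piecewise, Finset.mem_compl, not_not]
  split_ifs <;> simp_all
  ring

end Factorization

section NoisyOr

variable {m : ℕ} {i k : Fin m} {par : Fin m → Fin m} {t : Fin m → Bool → Bool → ℝ}

lemma gfun_eq_rootedSum (f : Fin m → ℝ) (k : Fin m) (c : Bool) :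
    gfun m par t f k c = rootedSum par t f (subtree m par k) k c := by
  unfold gfun rootedSum
  congr!

theorem sum_qfun_mul_prod_weight (hroot : par i = i) (hki : k ≠ i) (hpark : par k = i)
    (ρ : Bool → ℝ) (g : Fin m → ℝ) (c d : Bool) :
    (∑ y : Fin m → Bool, if y i = c ∧ y k = d then
        qfun m i par ρ t y * ∏ v, (if y v then g v else 1) else 0) =
      ρ c * t k d c *
        (rootedSum par t g (subtree m par k) k d * rootedSum par t g (subtree m par k)ᶜ i c) := by
  rw [mul_assoc, ← sum_prod_edge_mul_prod_weight (self_mem_subtree k)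
    (root_notMem_subtree hroot hki) hpark (fun _ => par_mem_subtree)
    (fun v hv h => hv (mem_subtree_of_par_mem h)), Finset.mul_sum]
  refine Finset.sum_congr rfl fun y _ => ?_
  split_ifs with h
  · rw [qfun, h.1, mul_assoc]
  · rw [mul_zero]

lemma par_mem_compl_subtree {v : Fin m} (hv : v ∈ (subtree m par k)ᶜ.erase i) :
    par v ∈ (subtree m par k)ᶜ :=
  Finset.mem_compl.2 fun h =>
    Finset.mem_compl.1 (Finset.mem_of_mem_erase hv) (mem_subtree_of_par_mem h)

theorem sum_qfun_eq (hroot : par i = i) (hreach : ∀ v, ∃ n, par^[n] v = i)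
    (ht1 : ∀ v, v ≠ i → ∀ c, t v false c + t v true c = 1) (hki : k ≠ i)
    (hpark : par k = i) (ρ : Bool → ℝ) (c d : Bool) :
    (∑ y : Fin m → Bool, if y i = c ∧ y k = d then qfun m i par ρ t y else 0) =
      ρ c * t k d c := by
  have hiT := root_notMem_subtree hroot hki
  have h := sum_qfun_mul_prod_weight (t := t) hroot hki hpark ρ 1 c d
  rw [rootedSum_one_eq_one hreach ht1 (self_mem_subtree k) (fun _ => par_mem_subtree)
      fun h => hiT (Finset.mem_of_mem_erase h),
    rootedSum_one_eq_one hreach ht1 (Finset.mem_compl.2 hiT) (fun _ => par_mem_compl_subtree)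
      (Finset.notMem_erase i _), mul_one, mul_one] at h
  simpa using h

theorem sum_qfun_mul_Sfun_eq (hroot : par i = i) (hki : k ≠ i) (hpark : par k = i)
    (ρ : Bool → ℝ) (l : ℝ) (f : Fin m → ℝ) (c d : Bool) :
    (∑ y : Fin m → Bool, if y i = c ∧ y k = d then
        qfun m i par ρ t y * Sfun m l f y else 0) =
      ρ c * t k d c *
        ((1 - l) * gfun m par t f k d * rootedSum par t f (subtree m par k)ᶜ i c) := by
  rw [gfun_eq_rootedSum, mul_assoc (1 - l), ← mul_left_comm,
    ← sum_qfun_mul_prod_weight hroot hki hpark, Finset.mul_sum]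
  refine Finset.sum_congr rfl fun y _ => ?_
  split_ifs
  · rw [Sfun]; ring
  · rw [mul_zero]

end NoisyOr

theorem correction_factor_from_low_order_moments_general (m : ℕ) (i : Fin m)
    (par : Fin m → Fin m)
    (hroot : par i = i)
    (hreach : ∀ v, ∃ n : ℕ, par^[n] v = i)
    (ρ : Bool → ℝ)
    (t : Fin m → Bool → Bool → ℝ)
    (ht0 : ∀ v, v ≠ i → ∀ a c, 0 ≤ t v a c)
    (ht1 : ∀ v, v ≠ i → ∀ c, t v false c + t v true c = 1)
    (l : ℝ) (hl1 : l < 1)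
    (f : Fin m → ℝ) (hf : ∀ v, 0 < f v ∧ f v ≤ 1)
    (k : Fin m) (hki : k ≠ i) (hpark : par k = i)
    (hρf : 0 < ρ false) (hρt : 0 < ρ true)
    (htk : ∀ d : Bool, 0 < t k d false) :
    (∑ d : Bool, t k d true * gfun m par t f k d) /
        (∑ d : Bool, t k d false * gfun m par t f k d) =
      (∑ d : Bool,
          ((∑ y : Fin m → Bool,
              if y i = true ∧ y k = d then qfun m i par ρ t y else 0) / ρ true) *
            ((∑ y : Fin m → Bool,
                if y i = false ∧ y k = d then
                  qfun m i par ρ t y * Sfun m l f y else 0) /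
              (∑ y : Fin m → Bool,
                if y i = false ∧ y k = d then qfun m i par ρ t y else 0))) /
        ((∑ y : Fin m → Bool,
            if y i = false then qfun m i par ρ t y * Sfun m l f y else 0) / ρ false) := by
  have hiT := root_notMem_subtree hroot hki
  have hG : ∀ d, 0 < gfun m par t f k d := fun d => gfun_eq_rootedSum f k d ▸
    rootedSum_pos hreach ht0 ht1 hf (self_mem_subtree k) (fun _ => par_mem_subtree)
      (fun h => hiT (Finset.mem_of_mem_erase h)) d
  have hW : 0 < rootedSum par t f (subtree m par k)ᶜ i false :=
    rootedSum_pos hreach ht0 ht1 hf (Finset.mem_compl.2 hiT) (fun _ => par_mem_compl_subtree)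
      (Finset.notMem_erase i _) false
  have hmarg : (∑ y : Fin m → Bool, if y i = false then
      qfun m i par ρ t y * Sfun m l f y else 0) =
      ∑ d, ∑ y : Fin m → Bool, if y i = false ∧ y k = d then
        qfun m i par ρ t y * Sfun m l f y else 0 := by
    rw [Finset.sum_comm]
    refine Finset.sum_congr rfl fun y _ => ?_
    cases y k <;> simp
  have hl : 0 < 1 - l := sub_pos.2 hl1
  have htf := htk false
  have htt := htk true
  have hGf := hG false
  have hGt := hG true
  rw [hmarg]
  simp only [sum_qfun_eq hroot hreach ht1 hki hpark, sum_qfun_mul_Sfun_eq hroot hki hpark,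
    Fintype.sum_bool]
  field_simp

/-- The subtree correction factor
`(Σ_d t_k(d,1) g_k(d)) / (Σ_d t_k(d,0) g_k(d))` equals the low-order moment
expression `(Σ_d P(Y_k=d | Y_i=1) P(X=0 | Y_i=0, Y_k=d)) / P(X=0 | Y_i=0)`. -/
theorem correction_factor_from_low_order_moments (m : ℕ) (i : Fin m)
    (par : Fin m → Fin m)
    (hroot : par i = i) (hne : ∀ v, v ≠ i → par v ≠ v)
    (hreach : ∀ v, ∃ n : ℕ, par^[n] v = i)
    (ρ : Bool → ℝ) (hρ0 : ∀ c, 0 ≤ ρ c) (hρ1 : ρ false + ρ true = 1)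
    (t : Fin m → Bool → Bool → ℝ)
    (ht0 : ∀ v, v ≠ i → ∀ a c, 0 ≤ t v a c)
    (ht1 : ∀ v, v ≠ i → ∀ c, t v false c + t v true c = 1)
    (l : ℝ) (hl0 : 0 ≤ l) (hl1 : l < 1)
    (f : Fin m → ℝ) (hf : ∀ v, 0 < f v ∧ f v ≤ 1)
    (k : Fin m) (hki : k ≠ i) (hpark : par k = i)
    (hρf : 0 < ρ false) (hρt : 0 < ρ true)
    (htk : ∀ d : Bool, 0 < t k d false) :
    (∑ d : Bool, t k d true * gfun m par t f k d) /
        (∑ d : Bool, t k d false * gfun m par t f k d) =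
      (∑ d : Bool,
          ((∑ y : Fin m → Bool,
              if y i = true ∧ y k = d then qfun m i par ρ t y else 0) / ρ true) *
            ((∑ y : Fin m → Bool,
                if y i = false ∧ y k = d then
                  qfun m i par ρ t y * Sfun m l f y else 0) /
              (∑ y : Fin m → Bool,
                if y i = false ∧ y k = d then qfun m i par ρ t y else 0))) /
        ((∑ y : Fin m → Bool,
            if y i = false then qfun m i par ρ t y * Sfun m l f y else 0) / ρ false) :=
  correction_factor_from_low_order_moments_general m i par hroot hreach ρ t ht0 ht1 l hl1 f hf k hki
    hpark hρf hρt htk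
end

section
/- Fix n ≥ 1 and for each k ∈ {1,...,n} a function r_k : {0,1} × {0,1} → ℝ with 0 < r_k(a, z) < 1 for all a, z, r_k(0,z) + r_k(1,z) = 1 for each z, and r_k(1,0) ≠ r_k(1,1). Let R(a, z) = Π_{k=1}^n r_k(a_k, z_k) and, for a pmf μ on {0,1}^n, let (Rμ)(a) = Σ_z R(a, z)μ(z) (which is again a pmf with strictly positive entries). Fix a pmf μ* on {0,1}^n and define F(μ) = Σ_{a ∈ {0,1}^n} (Rμ*)(a) · log((Rμ*)(a) / (Rμ)(a)) for pmfs μ. Then F(μ) ≥ 0 for every pmf μ, and F(μ) = 0 if and only if μ = μ*; hence μ* is the unique minimizer of the population-level KL moment-recovery objective over the probability simplex. -/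
/-!
The anchor distribution is `Rμ`, where `R` is the Kronecker product of the `2 × 2` column-stochastic
matrices `r k`. Each `r k` has determinant `r k 1 1 - r k 1 0 ≠ 0`, so `R` is invertible and
`μ ↦ Rμ` is injective; it also maps the simplex into strictly positive distributions. Gibbs'
inequality, written as `∑ p log (p / q) = ∑ q · klFun (p / q)` with `klFun x = x log x + 1 - x ≥ 0`
vanishing only at `x = 1`, then gives `F(μ) ≥ 0` with equality iff `Rμ = Rμ*`, i.e. iff `μ = μ*`.
-/

open Finset Matrix InformationTheory Real

section Gibbs

variable {ι : Type*} [Fintype ι] {p q : ι → ℝ}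

lemma sum_mul_log_div_eq_sum_mul_klFun (hq : ∀ i, 0 < q i) (hpq : ∑ i, p i = ∑ i, q i) :
    ∑ i, p i * log (p i / q i) = ∑ i, q i * klFun (p i / q i) := by
  have h : ∀ i, q i * klFun (p i / q i) = p i * log (p i / q i) + (q i - p i) := by
    intro i
    have hqi := (hq i).ne'
    rw [klFun_apply]
    field_simp
    ring
  simp_rw [h, sum_add_distrib, sum_sub_distrib, hpq, sub_self, add_zero]

lemma sum_mul_log_div_nonneg (hp : ∀ i, 0 ≤ p i) (hq : ∀ i, 0 < q i)
    (hpq : ∑ i, p i = ∑ i, q i) : 0 ≤ ∑ i, p i * log (p i / q i) := by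
  rw [sum_mul_log_div_eq_sum_mul_klFun hq hpq]
  exact sum_nonneg fun i _ ↦ mul_nonneg (hq i).le (klFun_nonneg (div_nonneg (hp i) (hq i).le))

lemma sum_mul_log_div_eq_zero_iff (hp : ∀ i, 0 ≤ p i) (hq : ∀ i, 0 < q i)
    (hpq : ∑ i, p i = ∑ i, q i) : ∑ i, p i * log (p i / q i) = 0 ↔ p = q := by
  have hpq_nonneg i : 0 ≤ p i / q i := div_nonneg (hp i) (hq i).le
  rw [sum_mul_log_div_eq_sum_mul_klFun hq hpq,
    sum_eq_zero_iff_of_nonneg fun i _ ↦ mul_nonneg (hq i).le (klFun_nonneg (hpq_nonneg i)),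
    funext_iff]
  refine forall_congr' fun i ↦ ?_
  rw [mul_eq_zero, or_iff_right (hq i).ne', klFun_eq_zero_iff (hpq_nonneg i),
    div_eq_one_iff_eq (hq i).ne']
  exact ⟨fun h ↦ h (mem_univ i), fun h _ ↦ h⟩

end Gibbs

namespace Matrix

variable {ι α β γ R : Type*} [Fintype ι]

def piKronecker [CommMonoid R] (M : ι → Matrix α β R) : Matrix (ι → α) (ι → β) R :=
  of fun a b ↦ ∏ i, M i (a i) (b i)

@[simp]
lemma piKronecker_apply [CommMonoid R] (M : ι → Matrix α β R) (a : ι → α) (b : ι → β) :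
    piKronecker M a b = ∏ i, M i (a i) (b i) :=
  rfl

section CommSemiring

variable [CommSemiring R]

lemma piKronecker_mul [DecidableEq ι] [Fintype β] (M : ι → Matrix α β R) (N : ι → Matrix β γ R) :
    piKronecker M * piKronecker N = piKronecker fun i ↦ M i * N i := by
  ext a c
  simp only [mul_apply, piKronecker_apply, ← prod_mul_distrib, Fintype.prod_sum]

lemma piKronecker_one [DecidableEq α] : piKronecker (fun _ : ι ↦ (1 : Matrix α α R)) = 1 := by
  ext a b
  simp only [piKronecker_apply, one_apply, prod_boole, mem_univ, true_implies, funext_iff]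

end CommSemiring

lemma isUnit_piKronecker [CommRing R] [DecidableEq ι] [Fintype α] [DecidableEq α]
    {M : ι → Matrix α α R} (hM : ∀ i, IsUnit (M i)) : IsUnit (piKronecker M) := by
  rw [isUnit_iff_isUnit_det]
  refine isUnit_det_of_left_inverse (B := piKronecker fun i ↦ (M i)⁻¹) ?_
  simp_rw [piKronecker_mul, nonsing_inv_mul _ ((isUnit_iff_isUnit_det _).1 (hM _)), piKronecker_one]

lemma piKronecker_mem_colStochastic [CommSemiring R] [PartialOrder R] [IsOrderedRing R]
    [DecidableEq ι] [Fintype α] [DecidableEq α] {M : ι → Matrix α α R}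
    (hM : ∀ i, M i ∈ colStochastic R α) : piKronecker M ∈ colStochastic R (ι → α) := by
  simp only [mem_colStochastic_iff_sum] at hM ⊢
  refine ⟨fun a b ↦ prod_nonneg fun i _ ↦ (hM i).1 _ _, fun b ↦ ?_⟩
  exact (Fintype.prod_sum fun i x ↦ M i x (b i)).symm.trans (prod_eq_one fun i _ ↦ (hM i).2 (b i))

lemma mulVec_pos [Fintype β] [Semiring R] [PartialOrder R] [IsStrictOrderedRing R]
    {M : Matrix α β R} (hM : ∀ a b, 0 < M a b) {v : β → R} (hv : 0 ≤ v) (hv₀ : v ≠ 0) (a : α) :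
    0 < (M *ᵥ v) a := by
  obtain ⟨b, hb⟩ := Function.ne_iff.1 hv₀
  exact sum_pos' (fun b _ ↦ mul_nonneg (hM a b).le (hv b))
    ⟨b, mem_univ b, mul_pos (hM a b) ((hv b).lt_of_ne' hb)⟩

lemma isUnit_of_add_eq_one_of_ne [Field R] {M : Matrix Bool Bool R}
    (hM : ∀ b, M false b + M true b = 1) (hne : M true false ≠ M true true) : IsUnit M := by
  rw [isUnit_iff_isUnit_det, isUnit_iff_ne_zero, Ne, ← exists_mulVec_eq_zero_iff]
  rintro ⟨v, hv, hMv⟩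
  have h₀ := congrFun hMv false
  have h₁ := congrFun hMv true
  simp only [mulVec, dotProduct, Fintype.sum_bool, Pi.zero_apply] at h₀ h₁
  -- columns summing to one make the kernel vector massless; the second row then isolates `v false`
  have hsum : v true + v false = 0 := by
    linear_combination h₀ + h₁ - v true * hM true - v false * hM false
  have hfalse : v false = 0 := by
    have : (M true false - M true true) * v false = 0 := by
      linear_combination h₁ - M true true * hsum
    exact (mul_eq_zero.1 this).resolve_left (sub_ne_zero.2 hne)
  refine hv (funext fun b ↦ ?_)
  cases b
  · exact hfalse
  · show v true = 0
    linear_combination hsum - hfalse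

end Matrix

theorem kl_moment_recovery_unique_minimizer_general (n : ℕ)
    (r : Fin n → Bool → Bool → ℝ)
    (hr : ∀ k a z, 0 < r k a z ∧ r k a z < 1)
    (hsum : ∀ k z, r k false z + r k true z = 1)
    (hneq : ∀ k, r k true false ≠ r k true true)
    (μstar : (Fin n → Bool) → ℝ)
    (hμs0 : ∀ z, 0 ≤ μstar z) (hμs1 : ∑ z : Fin n → Bool, μstar z = 1) :
    ∀ μ : (Fin n → Bool) → ℝ, (∀ z, 0 ≤ μ z) → (∑ z : Fin n → Bool, μ z = 1) →
      (0 ≤ ∑ a : Fin n → Bool,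
          (∑ z : Fin n → Bool, (∏ k : Fin n, r k (a k) (z k)) * μstar z) *
            Real.log
              ((∑ z : Fin n → Bool, (∏ k : Fin n, r k (a k) (z k)) * μstar z) /
                (∑ z : Fin n → Bool, (∏ k : Fin n, r k (a k) (z k)) * μ z))) ∧
      ((∑ a : Fin n → Bool,
          (∑ z : Fin n → Bool, (∏ k : Fin n, r k (a k) (z k)) * μstar z) *
            Real.log
              ((∑ z : Fin n → Bool, (∏ k : Fin n, r k (a k) (z k)) * μstar z) /
                (∑ z : Fin n → Bool, (∏ k : Fin n, r k (a k) (z k)) * μ z))) = 0 ↔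
        μ = μstar) := by
  intro μ hμ0 hμ1
  set R := piKronecker fun k ↦ of (r k)
  have hR : R ∈ colStochastic ℝ (Fin n → Bool) :=
    piKronecker_mem_colStochastic fun k ↦ mem_colStochastic_iff_sum.2
      ⟨fun a z ↦ (hr k a z).1.le, fun z ↦ by simpa [Fintype.sum_bool, add_comm] using hsum k z⟩
  have hR_entry_pos a z : 0 < R a z :=
    show 0 < ∏ k, r k (a k) (z k) from prod_pos fun k _ ↦ (hr k (a k) (z k)).1
  have hR_pos {ν : (Fin n → Bool) → ℝ} (hν0 : ∀ z, 0 ≤ ν z) (hν1 : ∑ z, ν z = 1) a :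
      0 < (R *ᵥ ν) a :=
    mulVec_pos hR_entry_pos (fun z ↦ hν0 z) (by rintro rfl; simp at hν1) a
  have hR_inj : Function.Injective R.mulVec := mulVec_injective_iff_isUnit.2 <|
    isUnit_piKronecker fun k ↦ isUnit_of_add_eq_one_of_ne (hsum k) (hneq k)
  have hmass : ∑ a, (R *ᵥ μstar) a = ∑ a, (R *ᵥ μ) a := by
    rw [sum_mulVec_of_mem_colStochastic hR, sum_mulVec_of_mem_colStochastic hR, hμs1, hμ1]
  change 0 ≤ ∑ a, (R *ᵥ μstar) a * log ((R *ᵥ μstar) a / (R *ᵥ μ) a) ∧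
    (∑ a, (R *ᵥ μstar) a * log ((R *ᵥ μstar) a / (R *ᵥ μ) a) = 0 ↔ μ = μstar)
  have hstar_nonneg a := (hR_pos hμs0 hμs1 a).le
  rw [sum_mul_log_div_eq_zero_iff hstar_nonneg (hR_pos hμ0 hμ1) hmass, hR_inj.eq_iff, eq_comm]
  exact ⟨sum_mul_log_div_nonneg hstar_nonneg (hR_pos hμ0 hμ1) hmass, Iff.rfl⟩

/-- The population-level KL moment-recovery objective
`F(μ) = D_KL(Rμ* ∥ Rμ)` is nonnegative over the simplex and vanishes exactly
at `μ = μ*`; hence `μ*` is its unique minimizer. -/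
theorem kl_moment_recovery_unique_minimizer (n : ℕ) (hn : 1 ≤ n)
    (r : Fin n → Bool → Bool → ℝ)
    (hr : ∀ k a z, 0 < r k a z ∧ r k a z < 1)
    (hsum : ∀ k z, r k false z + r k true z = 1)
    (hneq : ∀ k, r k true false ≠ r k true true)
    (μstar : (Fin n → Bool) → ℝ)
    (hμs0 : ∀ z, 0 ≤ μstar z) (hμs1 : ∑ z : Fin n → Bool, μstar z = 1) :
    ∀ μ : (Fin n → Bool) → ℝ, (∀ z, 0 ≤ μ z) → (∑ z : Fin n → Bool, μ z = 1) →
      (0 ≤ ∑ a : Fin n → Bool,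
          (∑ z : Fin n → Bool, (∏ k : Fin n, r k (a k) (z k)) * μstar z) *
            Real.log
              ((∑ z : Fin n → Bool, (∏ k : Fin n, r k (a k) (z k)) * μstar z) /
                (∑ z : Fin n → Bool, (∏ k : Fin n, r k (a k) (z k)) * μ z))) ∧
      ((∑ a : Fin n → Bool,
          (∑ z : Fin n → Bool, (∏ k : Fin n, r k (a k) (z k)) * μstar z) *
            Real.log
              ((∑ z : Fin n → Bool, (∏ k : Fin n, r k (a k) (z k)) * μstar z) /
                (∑ z : Fin n → Bool, (∏ k : Fin n, r k (a k) (z k)) * μ z))) = 0 ↔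
        μ = μstar) :=
  kl_moment_recovery_unique_minimizer_general n r hr hsum hneq μstar hμs0 hμs1
end
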